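/- arXiv:1907.11978 — 5 statements merged into one kernel-verified Lean document; each statement's English description precedes it below -/
import Mathlib

section
/- The automorphism group of the Heawood graph has order 336. -/
instance : DecidablePred (Even : ZMod 14 → Prop) :=
  fun i => decidable_of_iff (∃ r, i = r + r) Iff.rfl

instance : DecidablePred (Odd : ZMod 14 → Prop) :=
  fun i => decidable_of_iff (∃ r, i = 2 * r + 1) Iff.rfl

/-- The Heawood graph: the simple graph on vertex set `ZMod 14` in which distinct vertices
`i` and `j` are adjacent iff `j = i + 1`, or `j = i - 1`, or (`i` is even and `j = i + 5`),
or (`i` is odd and `j = i - 5`). -/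
def heawood : SimpleGraph (ZMod 14) where
  Adj i j := i ≠ j ∧ (j = i + 1 ∨ j = i - 1 ∨ (Even i ∧ j = i + 5) ∨ (Odd i ∧ j = i - 5))
  symm := ⟨by intro i j; revert i j; decide⟩
  loopless := ⟨by intro i; revert i; decide⟩

/-- The automorphisms of a simple graph form a group under composition. -/
instance : Group (heawood ≃g heawood) where
  mul f g := g.trans f
  one := SimpleGraph.Iso.refl
  inv := SimpleGraph.Iso.symm
  mul_assoc _ _ _ := rfl
  one_mul _ := rfl
  mul_one _ := rfl
  inv_mul_cancel f := by ext x; exact f.symm_apply_apply x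

/-! ### Auxiliary machinery -/

instance : DecidableRel heawood.Adj := fun i j =>
  decidable_of_iff (i ≠ j ∧ (j = i + 1 ∨ j = i - 1 ∨ (Even i ∧ j = i + 5) ∨ (Odd i ∧ j = i - 5))) Iff.rfl

/-- Cheap boolean adjacency test. -/
def hwAdjB (i j : ZMod 14) : Bool :=
  ((i.val + 1) % 14 == j.val) || ((j.val + 1) % 14 == i.val) ||
  (i.val % 2 == 0 && (i.val + 5) % 14 == j.val) ||
  (i.val % 2 == 1 && (j.val + 5) % 14 == i.val)

lemma hwAdjB_iff : ∀ i j : ZMod 14, heawood.Adj i j ↔ hwAdjB i j = true := by decide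

/-- The three neighbours of a vertex. -/
def hwNbr (i : ZMod 14) : Fin 3 → ZMod 14 :=
  ![i + 1, i - 1, if i.val % 2 = 0 then i + 5 else i - 5]

/-- The two neighbours of `v` other than `p`. -/
def hwRest (v p : ZMod 14) : Fin 2 → ZMod 14 := fun k =>
  if hwNbr v 0 = p then (if k = 0 then hwNbr v 1 else hwNbr v 2)
  else if hwNbr v 1 = p then (if k = 0 then hwNbr v 0 else hwNbr v 2)
  else (if k = 0 then hwNbr v 0 else hwNbr v 1)

/-- The neighbour of `v` other than `x` and `y`. -/
def hwThird (v x y : ZMod 14) : ZMod 14 :=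
  if hwNbr v 0 ≠ x ∧ hwNbr v 0 ≠ y then hwNbr v 0
  else if hwNbr v 1 ≠ x ∧ hwNbr v 1 ≠ y then hwNbr v 1 else hwNbr v 2

/-- The common neighbour of `a` and `e`. -/
def hwUcn (a e : ZMod 14) : ZMod 14 :=
  if hwAdjB (hwNbr a 0) e then hwNbr a 0
  else if hwAdjB (hwNbr a 1) e then hwNbr a 1 else hwNbr a 2

/-- Index type for 4-arcs based at a vertex. -/
abbrev HwArcIx := ZMod 14 × Fin 3 × Fin 2 × Fin 2 × Fin 2

/-- The candidate automorphism associated with a 4-arc index. -/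
def hwPsi (x : HwArcIx) : ZMod 14 → ZMod 14 := fun i =>
  let a := x.1
  let b := hwNbr a x.2.1
  let c := hwRest b a x.2.2.1
  let d := hwRest c b x.2.2.2.1
  let e := hwRest d c x.2.2.2.2
  let f5 := hwUcn a e
  let f6 := hwThird f5 a e
  let f7 := hwThird c b d
  if i = 0 then a else if i = 1 then b else if i = 2 then c else if i = 3 then d
  else if i = 4 then e else if i = 5 then f5 else if i = 6 then f6 else if i = 7 then f7
  else if i = 8 then hwThird f7 f6 c else if i = 9 then hwThird e d f5
  else if i = 10 then hwThird b a c else if i = 11 then hwThird f6 f5 f7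
  else if i = 12 then hwRest d c (1 - x.2.2.2.2) else hwThird a b f5

set_option maxRecDepth 100000 in
set_option maxHeartbeats 4000000 in
lemma hwPsi_adjB : ∀ (x : HwArcIx) (i j : ZMod 14), hwAdjB (hwPsi x i) (hwPsi x j) = hwAdjB i j := by
  decide

lemma hwSep : ∀ i j : ZMod 14, i ≠ j → ∃ w, hwAdjB i w = true ∧ hwAdjB j w = false := by decide

lemma hwPsi_inj (x : HwArcIx) : Function.Injective (hwPsi x) := by
  intro i j hij
  by_contra hne
  obtain ⟨w, hw1, hw2⟩ := hwSep i j hne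
  have a := hwPsi_adjB x i w
  have b := hwPsi_adjB x j w
  rw [hij] at a
  rw [a, hw2] at b
  rw [hw1] at b
  exact Bool.noConfusion b

lemma hwPsi_adj_iff (x : HwArcIx) (i j : ZMod 14) :
    heawood.Adj (hwPsi x i) (hwPsi x j) ↔ heawood.Adj i j := by
  rw [hwAdjB_iff, hwAdjB_iff, hwPsi_adjB]

/-- The automorphism associated with a 4-arc index. -/
noncomputable def hwIso (x : HwArcIx) : heawood ≃g heawood where
  toEquiv := Equiv.ofBijective (hwPsi x) (Finite.injective_iff_bijective.1 (hwPsi_inj x))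
  map_rel_iff' := by intro i j; exact hwPsi_adj_iff x i j

lemma hwIso_apply (x : HwArcIx) (i : ZMod 14) : hwIso x i = hwPsi x i := rfl

/-! ### Rigidity: an automorphism is determined by its values on `0,1,2,3,4`. -/

lemma hwStep {h : ZMod 14 → ZMod 14} (hinj : Function.Injective h)
    {u w1 w2 n1 n2 n3 : ZMod 14}
    (E : h u = n1 ∨ h u = n2 ∨ h u = n3)
    (h1 : h w1 = n1) (h2 : h w2 = n2) (ne1 : u ≠ w1) (ne2 : u ≠ w2) : h u = n3 := by
  rcases E with E | E | E
  · exact absurd (hinj (E.trans h1.symm)) ne1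
  · exact absurd (hinj (E.trans h2.symm)) ne2
  · exact E

lemma hwRigidAux (h : ZMod 14 → ZMod 14) (hinj : Function.Injective h)
    (hadj : ∀ u v, heawood.Adj u v → heawood.Adj (h u) (h v))
    (h0 : h 0 = 0) (h1 : h 1 = 1) (h2 : h 2 = 2) (h3 : h 3 = 3) (h4 : h 4 = 4) :
    ∀ v, h v = v := by
  have n0 : ∀ y, heawood.Adj y 0 → y = 1 ∨ y = 5 ∨ y = 13 := by decide
  have n1l : ∀ y, heawood.Adj y 1 → y = 0 ∨ y = 2 ∨ y = 10 := by decide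
  have n2l : ∀ y, heawood.Adj y 2 → y = 1 ∨ y = 3 ∨ y = 7 := by decide
  have n3l : ∀ y, heawood.Adj y 3 → y = 2 ∨ y = 4 ∨ y = 12 := by decide
  have n4l : ∀ y, heawood.Adj y 4 → y = 3 ∨ y = 5 ∨ y = 9 := by decide
  have n5l : ∀ y, heawood.Adj y 5 → y = 0 ∨ y = 4 ∨ y = 6 := by decide
  have n6l : ∀ y, heawood.Adj y 6 → y = 5 ∨ y = 7 ∨ y = 11 := by decide
  have n7l : ∀ y, heawood.Adj y 7 → y = 2 ∨ y = 6 ∨ y = 8 := by decide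
  have A50 : heawood.Adj (h 5) (h 0) := hadj 5 0 (by decide)
  have A54 : heawood.Adj (h 5) (h 4) := hadj 5 4 (by decide)
  rw [h0] at A50; rw [h4] at A54
  have h5 : h 5 = 5 :=
    (by decide : ∀ y : ZMod 14, (y = 1 ∨ y = 5 ∨ y = 13) → (y = 3 ∨ y = 5 ∨ y = 9) → y = 5)
      _ (n0 _ A50) (n4l _ A54)
  have h13 : h 13 = 13 := by
    have A := hadj 13 0 (by decide); rw [h0] at A
    exact hwStep hinj (n0 _ A) h1 h5 (by decide) (by decide)
  have h10 : h 10 = 10 := by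
    have A := hadj 10 1 (by decide); rw [h1] at A
    exact hwStep hinj (n1l _ A) h0 h2 (by decide) (by decide)
  have h7 : h 7 = 7 := by
    have A := hadj 7 2 (by decide); rw [h2] at A
    exact hwStep hinj (n2l _ A) h1 h3 (by decide) (by decide)
  have h12 : h 12 = 12 := by
    have A := hadj 12 3 (by decide); rw [h3] at A
    exact hwStep hinj (n3l _ A) h2 h4 (by decide) (by decide)
  have h9 : h 9 = 9 := by
    have A := hadj 9 4 (by decide); rw [h4] at A
    exact hwStep hinj (n4l _ A) h3 h5 (by decide) (by decide)
  have h6 : h 6 = 6 := by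
    have A := hadj 6 5 (by decide); rw [h5] at A
    exact hwStep hinj (n5l _ A) h0 h4 (by decide) (by decide)
  have h11 : h 11 = 11 := by
    have A := hadj 11 6 (by decide); rw [h6] at A
    exact hwStep hinj (n6l _ A) h5 h7 (by decide) (by decide)
  have h8 : h 8 = 8 := by
    have A := hadj 8 7 (by decide); rw [h7] at A
    exact hwStep hinj (n7l _ A) h2 h6 (by decide) (by decide)
  intro v
  have hv : ∀ w : ZMod 14, w = 0 ∨ w = 1 ∨ w = 2 ∨ w = 3 ∨ w = 4 ∨ w = 5 ∨ w = 6 ∨ w = 7 ∨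
      w = 8 ∨ w = 9 ∨ w = 10 ∨ w = 11 ∨ w = 12 ∨ w = 13 := by decide
  rcases hv v with rfl|rfl|rfl|rfl|rfl|rfl|rfl|rfl|rfl|rfl|rfl|rfl|rfl|rfl <;> assumption

lemma hwRigid (f g : heawood ≃g heawood)
    (h0 : f 0 = g 0) (h1 : f 1 = g 1) (h2 : f 2 = g 2) (h3 : f 3 = g 3) (h4 : f 4 = g 4) :
    ∀ v, f v = g v := by
  have hinj : Function.Injective (fun v => g.symm (f v) : ZMod 14 → ZMod 14) := fun u v huv =>
    f.toEquiv.injective (g.symm.toEquiv.injective huv)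
  have hadj : ∀ u v, heawood.Adj u v →
      heawood.Adj ((fun v => g.symm (f v)) u) ((fun v => g.symm (f v)) v) := fun u v huv =>
    g.symm.map_adj_iff.2 (f.map_adj_iff.2 huv)
  have key : ∀ v, (fun v => g.symm (f v)) v = v := by
    refine hwRigidAux _ hinj hadj ?_ ?_ ?_ ?_ ?_
    · show g.symm (f 0) = 0; rw [h0]; exact g.toEquiv.symm_apply_apply 0
    · show g.symm (f 1) = 1; rw [h1]; exact g.toEquiv.symm_apply_apply 1
    · show g.symm (f 2) = 2; rw [h2]; exact g.toEquiv.symm_apply_apply 2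
    · show g.symm (f 3) = 3; rw [h3]; exact g.toEquiv.symm_apply_apply 3
    · show g.symm (f 4) = 4; rw [h4]; exact g.toEquiv.symm_apply_apply 4
  intro v
  have h1v : g.symm (f v) = v := key v
  have h2v : g (g.symm (f v)) = g v := congrArg g h1v
  rwa [g.apply_symm_apply] at h2v

set_option maxHeartbeats 2000000 in
lemma hwPsi0 (x : HwArcIx) : hwPsi x 0 = x.1 := rfl
set_option maxHeartbeats 2000000 in
lemma hwPsi1 (x : HwArcIx) : hwPsi x 1 = hwNbr x.1 x.2.1 := rfl
set_option maxHeartbeats 2000000 in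
lemma hwPsi2 (x : HwArcIx) : hwPsi x 2 = hwRest (hwNbr x.1 x.2.1) x.1 x.2.2.1 := rfl
set_option maxHeartbeats 2000000 in
lemma hwPsi3 (x : HwArcIx) :
    hwPsi x 3 = hwRest (hwRest (hwNbr x.1 x.2.1) x.1 x.2.2.1) (hwNbr x.1 x.2.1) x.2.2.2.1 := rfl
set_option maxHeartbeats 2000000 in
lemma hwPsi4 (x : HwArcIx) :
    hwPsi x 4 = hwRest (hwRest (hwRest (hwNbr x.1 x.2.1) x.1 x.2.2.1) (hwNbr x.1 x.2.1) x.2.2.2.1)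
      (hwRest (hwNbr x.1 x.2.1) x.1 x.2.2.1) x.2.2.2.2 := rfl

lemma hwNbr_inj : ∀ (a : ZMod 14) (k k' : Fin 3), hwNbr a k = hwNbr a k' → k = k' := by decide

lemma hwRest_inj : ∀ (v p : ZMod 14) (k k' : Fin 2), hwRest v p k = hwRest v p k' → k = k' := by decide

lemma hwNbr_complete : ∀ v w : ZMod 14, heawood.Adj v w → ∃ k, hwNbr v k = w := by decide

lemma hwRest_complete : ∀ v p w : ZMod 14, heawood.Adj v p → heawood.Adj v w → w ≠ p →
    ∃ k, hwRest v p k = w := by decide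

lemma hwIso_bij : Function.Bijective hwIso := by
  constructor
  · intro x y hxy
    obtain ⟨a, k, k1, k2, k3⟩ := x
    obtain ⟨a', k', k1', k2', k3'⟩ := y
    have hv : ∀ v, hwPsi (a, k, k1, k2, k3) v = hwPsi (a', k', k1', k2', k3') v := fun v =>
      congrArg (fun (e : heawood ≃g heawood) => e v) hxy
    have ha : a = a' := by have := hv 0; rwa [hwPsi0, hwPsi0] at this
    subst ha
    have hb : k = k' := by
      have := hv 1; rw [hwPsi1, hwPsi1] at this; exact hwNbr_inj _ _ _ this
    subst hb
    have hc : k1 = k1' := by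
      have := hv 2; rw [hwPsi2, hwPsi2] at this; exact hwRest_inj _ _ _ _ this
    subst hc
    have hd : k2 = k2' := by
      have := hv 3; rw [hwPsi3, hwPsi3] at this; exact hwRest_inj _ _ _ _ this
    subst hd
    have he : k3 = k3' := by
      have := hv 4; rw [hwPsi4, hwPsi4] at this; exact hwRest_inj _ _ _ _ this
    subst he
    rfl
  · intro f
    have a01 : heawood.Adj (f 0) (f 1) := f.map_adj_iff.2 (by decide)
    have a12 : heawood.Adj (f 1) (f 2) := f.map_adj_iff.2 (by decide)
    have a23 : heawood.Adj (f 2) (f 3) := f.map_adj_iff.2 (by decide)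
    have a34 : heawood.Adj (f 3) (f 4) := f.map_adj_iff.2 (by decide)
    have ne20 : f 2 ≠ f 0 := fun h => absurd (f.toEquiv.injective h) (by decide)
    have ne31 : f 3 ≠ f 1 := fun h => absurd (f.toEquiv.injective h) (by decide)
    have ne42 : f 4 ≠ f 2 := fun h => absurd (f.toEquiv.injective h) (by decide)
    obtain ⟨k, hk⟩ := hwNbr_complete _ _ a01
    obtain ⟨k1, hk1⟩ := hwRest_complete _ _ _ a01.symm a12 ne20
    obtain ⟨k2, hk2⟩ := hwRest_complete _ _ _ a12.symm a23 ne31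
    obtain ⟨k3, hk3⟩ := hwRest_complete _ _ _ a23.symm a34 ne42
    refine ⟨(f 0, k, k1, k2, k3), ?_⟩
    have h0 : hwIso (f 0, k, k1, k2, k3) 0 = f 0 := by
      rw [hwIso_apply, hwPsi0]
    have h1 : hwIso (f 0, k, k1, k2, k3) 1 = f 1 := by
      rw [hwIso_apply, hwPsi1]; exact hk
    have h2 : hwIso (f 0, k, k1, k2, k3) 2 = f 2 := by
      rw [hwIso_apply, hwPsi2]
      show hwRest (hwNbr (f 0) k) (f 0) k1 = f 2
      rw [hk]; exact hk1
    have h3 : hwIso (f 0, k, k1, k2, k3) 3 = f 3 := by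
      rw [hwIso_apply, hwPsi3]
      show hwRest (hwRest (hwNbr (f 0) k) (f 0) k1) (hwNbr (f 0) k) k2 = f 3
      rw [hk, hk1]; exact hk2
    have h4 : hwIso (f 0, k, k1, k2, k3) 4 = f 4 := by
      rw [hwIso_apply, hwPsi4]
      show hwRest (hwRest (hwRest (hwNbr (f 0) k) (f 0) k1) (hwNbr (f 0) k) k2)
        (hwRest (hwNbr (f 0) k) (f 0) k1) k3 = f 4
      rw [hk, hk1, hk2]; exact hk3
    exact DFunLike.ext _ _ (hwRigid _ f h0 h1 h2 h3 h4)

/-- The automorphism group of the Heawood graph has order `336`. -/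
theorem heawood_automorphism_group_card : Nat.card (heawood ≃g heawood) = 336 := by
  rw [← Nat.card_eq_of_bijective hwIso hwIso_bij, Nat.card_eq_fintype_card]
  simp [ZMod.card]
end

section
/- The Heawood graph contains exactly 28 six-cycles; that is, the set of subgraphs of the Heawood graph that are isomorphic to the cycle graph on 6 vertices has cardinality 28. -/
/-- An `n`-cycle of a simple graph `G` is a subgraph of `G` isomorphic to the cycle graph
on `n` vertices. -/
def IsNCycle {V : Type*} {G : SimpleGraph V} (n : ℕ) (C : G.Subgraph) : Prop :=
  Nonempty (C.coe ≃g SimpleGraph.cycleGraph n)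

/-! ### Auxiliary definitions -/

instance inst_s3 : DecidableRel heawood.Adj :=
  fun _ _ => inferInstanceAs (Decidable (_ ∧ _))

/-- Cheap decidable form of heawood adjacency. -/
@[reducible] def adjF (a b : ZMod 14) : Prop :=
  b = a + 1 ∨ b = a + 13 ∨ (a.val % 2 = 0 ∧ b = a + 5) ∨ (a.val % 2 = 1 ∧ b = a + 9)

theorem adjF_iff : ∀ a b, heawood.Adj a b ↔ adjF a b := by decide

/-- edge finset of a hexagon given by 6 vertices -/
def eT (a0 a1 a2 a3 a4 a5 : ZMod 14) : Finset (Sym2 (ZMod 14)) :=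
  {s(a0,a1), s(a1,a2), s(a2,a3), s(a3,a4), s(a4,a5), s(a5,a0)}

def L28 : List (Fin 6 → ZMod 14) := [
  ![0, 1, 2, 3, 4, 5],
  ![0, 1, 2, 3, 12, 13],
  ![0, 1, 2, 7, 6, 5],
  ![0, 1, 2, 7, 8, 13],
  ![0, 1, 10, 9, 4, 5],
  ![0, 1, 10, 9, 8, 13],
  ![0, 1, 10, 11, 6, 5],
  ![0, 1, 10, 11, 12, 13],
  ![0, 5, 4, 3, 12, 13],
  ![0, 5, 4, 9, 8, 13],
  ![0, 5, 6, 7, 8, 13],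
  ![0, 5, 6, 11, 12, 13],
  ![1, 2, 3, 4, 9, 10],
  ![1, 2, 3, 12, 11, 10],
  ![1, 2, 7, 6, 11, 10],
  ![1, 2, 7, 8, 9, 10],
  ![2, 3, 4, 5, 6, 7],
  ![2, 3, 4, 9, 8, 7],
  ![2, 3, 12, 11, 6, 7],
  ![2, 3, 12, 13, 8, 7],
  ![3, 4, 5, 6, 11, 12],
  ![3, 4, 9, 8, 13, 12],
  ![3, 4, 9, 10, 11, 12],
  ![4, 5, 6, 7, 8, 9],
  ![4, 5, 6, 11, 10, 9],
  ![6, 7, 8, 9, 10, 11],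
  ![6, 7, 8, 13, 12, 11],
  ![8, 9, 10, 11, 12, 13]
]

/-- The edge finset of the hexagon traced out by `f`. -/
def eF (f : Fin 6 → ZMod 14) : Finset (Sym2 (ZMod 14)) :=
  eT (f 0) (f 1) (f 2) (f 3) (f 4) (f 5)

def EL : List (Finset (Sym2 (ZMod 14))) := L28.map eF

set_option synthInstance.maxHeartbeats 400000 in
set_option synthInstance.maxSize 5000 in
set_option maxRecDepth 100000 in
set_option maxHeartbeats 4000000 in
theorem key : ∀ a0 a1 : ZMod 14, adjF a0 a1 → ∀ a2, adjF a1 a2 → a0 ≠ a2 →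
    ∀ a3, adjF a2 a3 → a0 ≠ a3 → a1 ≠ a3 →
    ∀ a4, adjF a3 a4 → a0 ≠ a4 → a1 ≠ a4 → a2 ≠ a4 →
    ∀ a5, adjF a4 a5 → a0 ≠ a5 → a1 ≠ a5 → a2 ≠ a5 → a3 ≠ a5 → adjF a5 a0 →
    eT a0 a1 a2 a3 a4 a5 ∈ EL := by decide

/-- The subgraph of `heawood` with given edge set. -/
def sub0 (E : Finset (Sym2 (ZMod 14))) : heawood.Subgraph where
  verts := {v | ∃ e ∈ E, v ∈ e}
  Adj a b := heawood.Adj a b ∧ s(a, b) ∈ E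
  adj_sub h := h.1
  edge_vert h := ⟨s(_, _), h.2, Sym2.mem_mk_left _ _⟩
  symm := ⟨fun a b h => ⟨h.1.symm, Sym2.eq_swap ▸ h.2⟩⟩

def cycSub (f : Fin 6 → ZMod 14) : heawood.Subgraph := sub0 (eF f)

def Valid (f : Fin 6 → ZMod 14) : Prop :=
  Function.Injective f ∧ ∀ i, heawood.Adj (f i) (f (i + 1))

lemma fin6_exists {P : Fin 6 → Prop} : (∃ i, P i) ↔ P 0 ∨ P 1 ∨ P 2 ∨ P 3 ∨ P 4 ∨ P 5 := by
  constructor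
  · rintro ⟨i, h⟩
    fin_cases i
    exacts [Or.inl h, Or.inr (Or.inl h), Or.inr (Or.inr (Or.inl h)),
      Or.inr (Or.inr (Or.inr (Or.inl h))), Or.inr (Or.inr (Or.inr (Or.inr (Or.inl h)))),
      Or.inr (Or.inr (Or.inr (Or.inr (Or.inr h))))]
  · rintro (h | h | h | h | h | h)
    exacts [⟨0, h⟩, ⟨1, h⟩, ⟨2, h⟩, ⟨3, h⟩, ⟨4, h⟩, ⟨5, h⟩]

lemma mem_eF {f : Fin 6 → ZMod 14} {e : Sym2 (ZMod 14)} :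
    e ∈ eF f ↔ ∃ i : Fin 6, e = s(f i, f (i + 1)) := by
  rw [fin6_exists]
  simp only [eF, eT, Finset.mem_insert, Finset.mem_singleton,
    show (0 : Fin 6) + 1 = 1 from rfl, show (1 : Fin 6) + 1 = 2 from rfl,
    show (2 : Fin 6) + 1 = 3 from rfl, show (3 : Fin 6) + 1 = 4 from rfl,
    show (4 : Fin 6) + 1 = 5 from rfl, show (5 : Fin 6) + 1 = 0 from rfl]

lemma verts_cycSub (f : Fin 6 → ZMod 14) : (cycSub f).verts = Set.range f := by
  ext v
  constructor
  · rintro ⟨e, he, hv⟩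
    rcases mem_eF.1 he with ⟨i, rfl⟩
    rcases Sym2.mem_iff.1 hv with h | h
    exacts [⟨i, h.symm⟩, ⟨i + 1, h.symm⟩]
  · rintro ⟨i, rfl⟩
    exact ⟨s(f i, f (i + 1)), mem_eF.2 ⟨i, rfl⟩, Sym2.mem_mk_left _ _⟩

lemma cycle_adj {i j : Fin 6} :
    (SimpleGraph.cycleGraph 6).Adj i j ↔ j = i + 1 ∨ i = j + 1 := by
  rw [SimpleGraph.cycleGraph_adj (n := 4)]
  constructor
  · rintro (h | h)
    · right; rw [← h]; abel
    · left; rw [← h]; abel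
  · rintro (rfl | rfl)
    · right; abel
    · left; abel

lemma isNCycle_cycSub {f : Fin 6 → ZMod 14} (hf : Valid f) : IsNCycle 6 (cycSub f) := by
  have hvm : ∀ i : Fin 6, f i ∈ (cycSub f).verts := by
    intro i; rw [verts_cycSub]; exact Set.mem_range_self i
  let e : Fin 6 ≃ (cycSub f).verts :=
    Equiv.ofBijective (fun i => ⟨f i, hvm i⟩)
      ⟨fun i j h => hf.1 (congrArg Subtype.val h), by
        rintro ⟨v, hv⟩
        rw [verts_cycSub] at hv
        obtain ⟨i, rfl⟩ := hv
        exact ⟨i, rfl⟩⟩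
  refine ⟨RelIso.symm ⟨e, ?_⟩⟩
  intro i j
  show (cycSub f).Adj (e i : ZMod 14) (e j : ZMod 14) ↔ _
  show (cycSub f).Adj (f i) (f j) ↔ _
  rw [cycle_adj]
  constructor
  · rintro ⟨-, hm⟩
    rcases mem_eF.1 hm with ⟨k, hk⟩
    rcases Sym2.eq_iff.1 hk with ⟨h1, h2⟩ | ⟨h1, h2⟩
    · left; rw [hf.1 h1, hf.1 h2]
    · right; rw [hf.1 h1, hf.1 h2]
  · rintro (rfl | rfl)
    · exact ⟨hf.2 i, mem_eF.2 ⟨i, rfl⟩⟩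
    · exact ⟨(hf.2 j).symm, mem_eF.2 ⟨j, Sym2.eq_swap⟩⟩

lemma exists_of_isNCycle {C : heawood.Subgraph} (h : IsNCycle 6 C) :
    ∃ f, Valid f ∧ C = cycSub f := by
  obtain ⟨iso⟩ := h
  set φ := iso.symm with hφ
  refine ⟨fun i => (φ i : ZMod 14), ⟨?_, ?_⟩, ?_⟩
  · exact fun i j hij => φ.toEquiv.injective (Subtype.ext hij)
  · intro i
    have : (SimpleGraph.cycleGraph 6).Adj i (i + 1) := cycle_adj.2 (Or.inl rfl)
    exact C.adj_sub (φ.map_rel_iff.2 this)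
  · have hadj : ∀ i : Fin 6, C.Adj (φ i : ZMod 14) (φ (i + 1) : ZMod 14) := by
      intro i
      exact φ.map_rel_iff.2 (cycle_adj.2 (Or.inl rfl))
    ext v w
    · constructor
      · intro hv
        have : ∃ i, φ i = (⟨v, hv⟩ : C.verts) := φ.toEquiv.surjective _
        obtain ⟨i, hi⟩ := this
        exact ⟨s(_, _), mem_eF.2 ⟨i, rfl⟩, by rw [hi]; exact Sym2.mem_mk_left _ _⟩
      · rintro ⟨e, he, hv⟩
        rcases mem_eF.1 he with ⟨i, rfl⟩
        rcases Sym2.mem_iff.1 hv with h | h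
        · rw [h]; exact (φ i).2
        · rw [h]; exact (φ (i + 1)).2
    · constructor
      · intro hvw
        have hv : v ∈ C.verts := C.edge_vert hvw
        have hw : w ∈ C.verts := C.edge_vert hvw.symm
        have hcoe : C.coe.Adj ⟨v, hv⟩ ⟨w, hw⟩ := hvw
        have : (SimpleGraph.cycleGraph 6).Adj (iso ⟨v, hv⟩) (iso ⟨w, hw⟩) :=
          iso.map_rel_iff.2 hcoe
        have hv' : (φ (iso ⟨v, hv⟩) : ZMod 14) = v := by
          rw [hφ]; exact congrArg Subtype.val (iso.toEquiv.symm_apply_apply _)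
        have hw' : (φ (iso ⟨w, hw⟩) : ZMod 14) = w := by
          rw [hφ]; exact congrArg Subtype.val (iso.toEquiv.symm_apply_apply _)
        refine ⟨C.adj_sub hvw, ?_⟩
        rcases cycle_adj.1 this with h1 | h1
        · exact mem_eF.2 ⟨iso ⟨v, hv⟩, by rw [← h1, hv', hw']⟩
        · exact mem_eF.2 ⟨iso ⟨w, hw⟩, by rw [← h1, hv', hw', Sym2.eq_swap]⟩
      · rintro ⟨-, hm⟩
        rcases mem_eF.1 hm with ⟨i, hi⟩
        rcases Sym2.eq_iff.1 hi with ⟨h1, h2⟩ | ⟨h1, h2⟩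
        · rw [h1, h2]; exact hadj i
        · rw [h1, h2]; exact (hadj i).symm

instance : DecidablePred Valid :=
  fun _ => inferInstanceAs (Decidable (_ ∧ _))

set_option maxRecDepth 4000 in
lemma validL : ∀ f ∈ L28, Valid f := by
  intro f hf
  simp only [L28, List.mem_cons, List.not_mem_nil, or_false] at hf
  rcases hf with rfl|rfl|rfl|rfl|rfl|rfl|rfl|rfl|rfl|rfl|rfl|rfl|rfl|rfl|rfl|rfl|rfl|rfl|rfl|rfl|rfl|rfl|rfl|rfl|rfl|rfl|rfl|rfl <;> decide

lemma key_applied {f : Fin 6 → ZMod 14} (hf : Valid f) : eF f ∈ EL := by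
  have inj : ∀ {i j : Fin 6}, i ≠ j → f i ≠ f j := fun hij h => hij (hf.1 h)
  have a01 := (adjF_iff _ _).1 (hf.2 0)
  have a12 := (adjF_iff _ _).1 (hf.2 1)
  have a23 := (adjF_iff _ _).1 (hf.2 2)
  have a34 := (adjF_iff _ _).1 (hf.2 3)
  have a45 := (adjF_iff _ _).1 (hf.2 4)
  have a50 := (adjF_iff _ _).1 (hf.2 5)
  exact key (f 0) (f 1) a01 (f 2) a12 (inj (by decide)) (f 3) a23 (inj (by decide))
    (inj (by decide)) (f 4) a34 (inj (by decide)) (inj (by decide)) (inj (by decide))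
    (f 5) a45 (inj (by decide)) (inj (by decide)) (inj (by decide)) (inj (by decide)) a50

lemma eF_eq_of_cycSub_eq {f g : Fin 6 → ZMod 14} (hf : Valid f) (hg : Valid g)
    (h : cycSub f = cycSub g) : eF f = eF g := by
  have hiff : ∀ (k : Fin 6 → ZMod 14), Valid k → ∀ e : Sym2 (ZMod 14),
      (e ∈ eF k ↔ ∃ a b, (cycSub k).Adj a b ∧ e = s(a, b)) := by
    intro k hk e
    constructor
    · intro he
      rcases mem_eF.1 he with ⟨i, rfl⟩
      exact ⟨k i, k (i + 1), ⟨hk.2 i, mem_eF.2 ⟨i, rfl⟩⟩, rfl⟩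
    · rintro ⟨a, b, hab, rfl⟩
      exact hab.2
  ext e
  rw [hiff f hf e, hiff g hg e, h]

def Lsub : List heawood.Subgraph := L28.map cycSub

lemma nodup_EL : EL.Nodup := by decide

lemma nodup_Lsub : Lsub.Nodup := by
  have h1 : L28.Pairwise (fun f g => eF f ≠ eF g) := by
    have h := nodup_EL
    rw [EL, List.Nodup, List.pairwise_map] at h
    exact h
  rw [Lsub, List.Nodup, List.pairwise_map]
  refine h1.imp_of_mem ?_
  intro f g hf hg hne heq
  exact hne (eF_eq_of_cycSub_eq (validL f hf) (validL g hg) heq)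

lemma mem_Lsub_iff (C : heawood.Subgraph) : IsNCycle 6 C ↔ C ∈ Lsub := by
  constructor
  · intro h
    obtain ⟨f, hf, rfl⟩ := exists_of_isNCycle h
    have hmem : eF f ∈ EL := key_applied hf
    rw [EL, List.mem_map] at hmem
    obtain ⟨g, hg, hfg⟩ := hmem
    have : cycSub f = cycSub g := by rw [cycSub, cycSub, hfg]
    rw [this]
    exact List.mem_map.2 ⟨g, hg, rfl⟩
  · intro h
    obtain ⟨g, hg, rfl⟩ := List.mem_map.1 h
    exact isNCycle_cycSub (validL g hg)

/-- The Heawood graph contains exactly 28 6-cycles. -/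
theorem heawood_count_6_cycles :
    Nat.card {C : heawood.Subgraph // IsNCycle 6 C} = 28 := by
  have e1 : {C : heawood.Subgraph // IsNCycle 6 C} ≃ {C // C ∈ Lsub} :=
    Equiv.subtypeEquivRight mem_Lsub_iff
  let F : Finset heawood.Subgraph := ⟨↑Lsub, nodup_Lsub⟩
  have e2 : {C // C ∈ Lsub} ≃ {C // C ∈ F} :=
    Equiv.subtypeEquivRight (fun C => (Multiset.mem_coe).symm)
  rw [Nat.card_congr (e1.trans e2), Nat.card_eq_fintype_card, Fintype.card_coe]
  rfl
end

section
/- The Heawood graph contains exactly 24 fourteen-cycles (Hamiltonian cycles); that is, the set of subgraphs of the Heawood graph that are isomorphic to the cycle graph on 14 vertices has cardinality 24. -/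
namespace HeawoodAux

instance : DecidableRel heawood.Adj := fun i j =>
  inferInstanceAs (Decidable (i ≠ j ∧ _))

def nbrList (c : ZMod 14) : List (ZMod 14) :=
  [c + 1, c - 1, if Even c then c + 5 else c - 5]

lemma mem_nbrList : ∀ {c x : ZMod 14}, heawood.Adj c x → x ∈ nbrList c := by decide

def cEdges (l : List (ZMod 14)) : List (Sym2 (ZMod 14)) :=
  (l.zip (l.rotate 1)).map fun p => s(p.1, p.2)

def targets : List (List (ZMod 14)) :=
  [[0, 1, 2, 3, 4, 5, 6, 7, 8, 9, 10, 11, 12, 13],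
   [0, 1, 2, 3, 4, 9, 10, 11, 12, 13, 8, 7, 6, 5],
   [0, 1, 2, 3, 12, 11, 10, 9, 4, 5, 6, 7, 8, 13],
   [0, 1, 2, 3, 12, 13, 8, 7, 6, 11, 10, 9, 4, 5],
   [0, 1, 2, 7, 6, 5, 4, 3, 12, 11, 10, 9, 8, 13],
   [0, 1, 2, 7, 6, 11, 10, 9, 8, 13, 12, 3, 4, 5],
   [0, 1, 2, 7, 8, 9, 10, 11, 6, 5, 4, 3, 12, 13],
   [0, 1, 2, 7, 8, 13, 12, 3, 4, 9, 10, 11, 6, 5],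
   [0, 1, 10, 9, 4, 3, 2, 7, 8, 13, 12, 11, 6, 5],
   [0, 1, 10, 9, 4, 5, 6, 11, 12, 3, 2, 7, 8, 13],
   [0, 1, 10, 9, 8, 7, 2, 3, 4, 5, 6, 11, 12, 13],
   [0, 1, 10, 9, 8, 13, 12, 11, 6, 7, 2, 3, 4, 5],
   [0, 1, 10, 11, 6, 5, 4, 9, 8, 7, 2, 3, 12, 13],
   [0, 1, 10, 11, 6, 7, 2, 3, 12, 13, 8, 9, 4, 5],
   [0, 1, 10, 11, 12, 3, 2, 7, 6, 5, 4, 9, 8, 13],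
   [0, 1, 10, 11, 12, 13, 8, 9, 4, 3, 2, 7, 6, 5],
   [0, 5, 4, 3, 2, 1, 10, 9, 8, 7, 6, 11, 12, 13],
   [0, 5, 4, 3, 12, 11, 6, 7, 2, 1, 10, 9, 8, 13],
   [0, 5, 4, 9, 8, 7, 6, 11, 10, 1, 2, 3, 12, 13],
   [0, 5, 4, 9, 10, 1, 2, 3, 12, 11, 6, 7, 8, 13],
   [0, 5, 6, 7, 2, 1, 10, 11, 12, 3, 4, 9, 8, 13],
   [0, 5, 6, 7, 8, 9, 4, 3, 2, 1, 10, 11, 12, 13],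
   [0, 5, 6, 11, 10, 1, 2, 7, 8, 9, 4, 3, 12, 13],
   [0, 5, 6, 11, 12, 3, 4, 9, 10, 1, 2, 7, 8, 13]]

def targetFinsets : List (Finset (Sym2 (ZMod 14))) :=
  targets.map fun t => (cEdges t).toFinset

def dfs : ℕ → List (ZMod 14) → Bool
  | 0, _ => false
  | fuel + 1, p =>
    if p.length = 14 then
      !decide (heawood.Adj (p.headD 0) (p.getLastD 0)) ||
        decide ((cEdges p.reverse).toFinset ∈ targetFinsets)
    else
      (nbrList (p.headD 0)).all fun x => decide (x ∈ p) || dfs fuel (x :: p)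

set_option maxRecDepth 100000 in
set_option maxHeartbeats 4000000 in
lemma dfs_start : dfs 14 [0] = true := by decide


lemma take_ofFn_succ (v : Fin 14 → ZMod 14) {m : ℕ} (hm : m < 14) :
    ((List.ofFn v).take (m + 1)).reverse = v ⟨m, hm⟩ :: ((List.ofFn v).take m).reverse := by
  rw [List.take_succ]
  have : (List.ofFn v)[m]? = some (v ⟨m, hm⟩) := by
    rw [List.getElem?_eq_getElem (by simpa using hm)]
    simp only [List.getElem_ofFn]
  rw [this]
  simp

lemma dfs_sound (v : Fin 14 → ZMod 14) (hinj : Function.Injective v)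
    (hadj : ∀ k : Fin 14, heawood.Adj (v k) (v (k + 1))) :
    ∀ (fuel m : ℕ) (hm : m < 14),
      dfs fuel (((List.ofFn v).take (m + 1)).reverse) = true →
      (cEdges (List.ofFn v)).toFinset ∈ targetFinsets := by
  intro fuel
  induction fuel with
  | zero => intro m hm h; simp [dfs] at h
  | succ fuel ih =>
    intro m hm h
    rw [take_ofFn_succ v hm] at h
    have hlen : (v ⟨m, hm⟩ :: ((List.ofFn v).take m).reverse).length = m + 1 := by
      simp [List.length_take]; omega
    by_cases hm13 : m = 13
    · -- leaf case
      subst hm13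
      have htake : (List.ofFn v).take 14 = List.ofFn v := by
        apply List.take_of_length_le; simp
      rw [dfs] at h
      rw [← take_ofFn_succ v hm] at h
      rw [htake] at h
      have hlenL : ((List.ofFn v).reverse).length = 14 := by simp
      rw [if_pos hlenL] at h
      have hhead : ((List.ofFn v).reverse).headD 0 = v 13 := by
        have : (List.ofFn v).reverse.head? = some (v 13) := by
          rw [List.head?_reverse, List.getLast?_eq_getElem?]
          simp only [List.length_ofFn]
          rw [List.getElem?_eq_getElem (by simp)]
          simp only [List.getElem_ofFn]
          rfl
        rw [List.headD_eq_head?_getD, this]; rfl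
      have hlast : ((List.ofFn v).reverse).getLastD 0 = v 0 := by
        have : (List.ofFn v).reverse.getLast? = some (v 0) := by
          rw [List.getLast?_reverse]
          rw [show (List.ofFn v) = v 0 :: List.ofFn (fun i : Fin 13 => v i.succ) from by
            simp [List.ofFn_succ]]
          rfl
        rw [List.getLastD_eq_getLast?, this]; rfl
      have hadj13 : heawood.Adj ((List.ofFn v).reverse.headD 0) ((List.ofFn v).reverse.getLastD 0) := by
        rw [hhead, hlast]
        have := hadj 13
        norm_num at this
        exact this
      rw [decide_eq_true hadj13] at h
      simp only [Bool.not_true, Bool.false_or, decide_eq_true_eq, List.reverse_reverse] at h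
      exact h
    · -- extension case
      have hm1 : m + 1 < 14 := by omega
      rw [dfs, hlen, if_neg (by omega)] at h
      simp only [List.headD_cons, List.all_eq_true] at h
      have hsucc : (⟨m, hm⟩ : Fin 14) + 1 = ⟨m + 1, hm1⟩ := by
        apply Fin.ext
        simp [Fin.val_add]
        omega
      have hmem : v ⟨m + 1, hm1⟩ ∈ nbrList (v ⟨m, hm⟩) := by
        apply mem_nbrList
        have := hadj ⟨m, hm⟩
        rwa [hsucc] at this
      have h2 := h _ hmem
      have hnotmem : v ⟨m + 1, hm1⟩ ∉ v ⟨m, hm⟩ :: ((List.ofFn v).take m).reverse := by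
        rw [← take_ofFn_succ v hm, List.mem_reverse]
        intro hc
        obtain ⟨i, hi, hieq⟩ := List.mem_iff_getElem.mp hc
        have hilen : i < m + 1 := by
          simp only [List.length_take, List.length_ofFn] at hi; omega
        have hi14 : i < 14 := by omega
        rw [List.getElem_take, List.getElem_ofFn] at hieq
        have := hinj hieq
        have : i = m + 1 := by simpa [Fin.ext_iff] using this
        omega
      rw [decide_eq_false hnotmem, Bool.false_or] at h2
      rw [← take_ofFn_succ v hm, ← take_ofFn_succ v hm1] at h2
      exact ih (m + 1) hm1 h2

lemma core (v : Fin 14 → ZMod 14) (hinj : Function.Injective v)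
    (hadj : ∀ k : Fin 14, heawood.Adj (v k) (v (k + 1))) (h0 : v 0 = 0) :
    (cEdges (List.ofFn v)).toFinset ∈ targetFinsets := by
  apply dfs_sound v hinj hadj 14 0 (by omega)
  rw [take_ofFn_succ v (by omega : (0:ℕ) < 14)]
  have : ((List.ofFn v).take 0).reverse = [] := by simp
  rw [this]
  have : (⟨0, by omega⟩ : Fin 14) = 0 := rfl
  rw [this, h0]
  exact dfs_start


lemma cyc_adj : ∀ a b : Fin 14,
    ((SimpleGraph.cycleGraph 14).Adj a b ↔ b = a + 1 ∨ a = b + 1) := by decide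

lemma mem_cEdges_ofFn (v : Fin 14 → ZMod 14) (e : Sym2 (ZMod 14)) :
    e ∈ (cEdges (List.ofFn v)).toFinset ↔ ∃ k : Fin 14, e = s(v k, v (k + 1)) := by
  have hfin : ∀ (i : ℕ) (hi : i < 14), (⟨i, hi⟩ : Fin 14) + 1 = ⟨(i + 1) % 14, Nat.mod_lt _ (by omega)⟩ := by
    intro i hi; apply Fin.ext; simp [Fin.val_add]
  rw [List.mem_toFinset]
  unfold cEdges
  rw [List.mem_map]
  constructor
  · rintro ⟨⟨a, b⟩, hmem, rfl⟩
    obtain ⟨i, hi, hieq⟩ := List.mem_iff_getElem.mp hmem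
    have hlen : i < 14 := by simpa [List.length_zip] using hi
    rw [List.getElem_zip] at hieq
    obtain ⟨h1, h2⟩ := Prod.ext_iff.mp hieq
    simp only at h1 h2
    refine ⟨⟨i, hlen⟩, ?_⟩
    rw [List.getElem_ofFn] at h1
    rw [List.getElem_rotate, List.getElem_ofFn] at h2
    show s(a, b) = _
    rw [← h1, ← h2, hfin i hlen]
    first
    | rfl
    | (congr 2; apply Fin.ext; simp [Fin.val_add])
  · rintro ⟨k, rfl⟩
    refine ⟨(v k, v (k + 1)), ?_, rfl⟩
    rw [List.mem_iff_getElem]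
    refine ⟨k.val, by simp [List.length_zip, k.isLt], ?_⟩
    rw [List.getElem_zip, List.getElem_ofFn, List.getElem_rotate, List.getElem_ofFn]
    congr 1
    all_goals
      apply congrArg v
      apply Fin.ext
      simp [Fin.val_add]

lemma isNCycle_iff (C : heawood.Subgraph) :
    IsNCycle 14 C ↔ ∃ v : Fin 14 → ZMod 14, Function.Injective v ∧
      (∀ k : Fin 14, heawood.Adj (v k) (v (k + 1))) ∧ v 0 = 0 ∧
      C.verts = Set.univ ∧ ∀ x y, (C.Adj x y ↔ s(x, y) ∈ (cEdges (List.ofFn v)).toFinset) := by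
  constructor
  · rintro ⟨e⟩
    set w : Fin 14 → ZMod 14 := fun k => ((e.symm k : C.verts) : ZMod 14) with hw
    have hwinj : Function.Injective w := by
      intro a b hab
      exact e.symm.toEquiv.injective (Subtype.ext hab)
    have hwsurj : Function.Surjective w :=
      ((Fintype.bijective_iff_injective_and_card w).mpr ⟨hwinj, by simp⟩).2
    have hverts : C.verts = Set.univ := by
      apply Set.eq_univ_of_forall
      intro x
      obtain ⟨k, hk⟩ := hwsurj x
      rw [← hk]; exact (e.symm k).2
    have h0 : (0 : ZMod 14) ∈ C.verts := hverts ▸ Set.mem_univ 0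
    set k0 : Fin 14 := e ⟨0, h0⟩ with hk0
    have hCw : ∀ k : Fin 14, C.Adj (w k) (w (k + 1)) := by
      intro k
      have hc : (SimpleGraph.cycleGraph 14).Adj k (k + 1) := by
        rw [cyc_adj]; left; rfl
      exact e.symm.map_adj_iff.mpr hc
    refine ⟨fun k => w (k + k0), hwinj.comp (fun a b hab => by
        have : a + k0 = b + k0 := hab
        exact add_right_cancel this), ?_, ?_, hverts, ?_⟩
    · intro k
      have := hCw (k + k0)
      have hrw : k + k0 + 1 = k + 1 + k0 := add_right_comm _ _ _
      rw [hrw] at this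
      exact C.adj_sub this
    · show w (0 + k0) = 0
      rw [zero_add, hk0]
      simp [hw]
    · intro x y
      constructor
      · intro hxy
        have hx : x ∈ C.verts := hxy.fst_mem
        have hy : y ∈ C.verts := hxy.snd_mem
        have hcadj : C.coe.Adj ⟨x, hx⟩ ⟨y, hy⟩ := hxy
        have hcyc := (e.map_adj_iff.mpr hcadj)
        rw [cyc_adj] at hcyc
        rw [mem_cEdges_ofFn]
        have hx' : w (e ⟨x, hx⟩) = x := by simp [hw]
        have hy' : w (e ⟨y, hy⟩) = y := by simp [hw]
        rcases hcyc with hc | hc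
        · refine ⟨e ⟨x, hx⟩ - k0, ?_⟩
          rw [sub_add_cancel, sub_add_eq_add_sub, sub_add_cancel, hx', ← hc, hy']
        · refine ⟨e ⟨y, hy⟩ - k0, ?_⟩
          rw [sub_add_cancel, sub_add_eq_add_sub, sub_add_cancel, hy', ← hc, hx', Sym2.eq_swap]
      · rw [mem_cEdges_ofFn]
        rintro ⟨k, hk⟩
        have hC : C.Adj (w (k + k0)) (w (k + k0 + 1)) := hCw (k + k0)
        have hrw : k + k0 + 1 = k + 1 + k0 := add_right_comm _ _ _
        rw [hrw] at hC
        rw [Sym2.eq_iff] at hk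
        rcases hk with ⟨hk1, hk2⟩ | ⟨hk1, hk2⟩
        · rw [hk1, hk2]; exact hC
        · rw [hk1, hk2]; exact hC.symm
  · rintro ⟨v, hinj, hadj, h0, hverts, hiff⟩
    have hbij : Function.Bijective v :=
      (Fintype.bijective_iff_injective_and_card v).mpr ⟨hinj, by simp⟩
    let vE : Fin 14 ≃ ZMod 14 := Equiv.ofBijective v hbij
    let φ : C.verts ≃ Fin 14 :=
      (Equiv.setCongr hverts).trans ((Equiv.Set.univ (ZMod 14)).trans vE.symm)
    have hφ : ∀ a : C.verts, v (φ a) = (a : ZMod 14) := by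
      intro a
      show v (vE.symm _) = _
      exact vE.apply_symm_apply _
    refine ⟨⟨φ, ?_⟩⟩
    intro a b
    show (SimpleGraph.cycleGraph 14).Adj (φ a) (φ b) ↔ C.coe.Adj a b
    have hcoe : C.coe.Adj a b ↔ C.Adj a b := Iff.rfl
    rw [hcoe, hiff, mem_cEdges_ofFn, cyc_adj]
    constructor
    · rintro h
      rcases h with h | h
      · exact ⟨φ a, by rw [← hφ a, ← hφ b, h]⟩
      · exact ⟨φ b, by rw [← hφ a, ← hφ b, h, Sym2.eq_swap]⟩
    · rintro ⟨k, hk⟩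
      rw [Sym2.eq_iff] at hk
      rcases hk with ⟨hk1, hk2⟩ | ⟨hk1, hk2⟩
      · left
        have h1 : φ a = k := by
          apply hinj; rw [hφ a, hk1]
        have h2 : φ b = k + 1 := by
          apply hinj; rw [hφ b, hk2]
        rw [h1, h2]
      · right
        have h1 : φ b = k := by
          apply hinj; rw [hφ b, hk2]
        have h2 : φ a = k + 1 := by
          apply hinj; rw [hφ a, hk1]
        rw [h1, h2]


def mkSub (E : Finset (Sym2 (ZMod 14))) : heawood.Subgraph where
  verts := Set.univ
  Adj x y := s(x, y) ∈ E ∧ heawood.Adj x y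
  adj_sub h := h.2
  edge_vert _ := Set.mem_univ _
  symm := ⟨fun x y h => ⟨Sym2.eq_swap (a := y) ▸ h.1, h.2.symm⟩⟩

def vOf (t : List (ZMod 14)) : Fin 14 → ZMod 14 := fun k => t.getD k.val 0

lemma targets_ofFn : ∀ t ∈ targets, List.ofFn (vOf t) = t := by decide
lemma targets_inj : ∀ t ∈ targets, Function.Injective (vOf t) := by decide
lemma targets_adj : ∀ t ∈ targets, ∀ k : Fin 14, heawood.Adj (vOf t k) (vOf t (k + 1)) := by
  decide
lemma targets_zero : ∀ t ∈ targets, vOf t 0 = 0 := by decide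
set_option maxRecDepth 10000 in
lemma cEdges_valid :
    ∀ t ∈ targets, ∀ x y : ZMod 14, s(x, y) ∈ cEdges t → heawood.Adj x y := by decide

lemma targetFinsets_valid :
    ∀ E ∈ targetFinsets, ∀ x y : ZMod 14, s(x, y) ∈ E → heawood.Adj x y := by
  intro E hE x y hm
  rw [targetFinsets, List.mem_map] at hE
  obtain ⟨t, ht, rfl⟩ := hE
  rw [List.mem_toFinset] at hm
  exact cEdges_valid t ht x y hm
set_option maxRecDepth 10000 in
lemma targetFinsets_nodup : targetFinsets.Nodup := by decide

lemma isNCycle_iff_mem (C : heawood.Subgraph) :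
    IsNCycle 14 C ↔ C ∈ targetFinsets.map mkSub := by
  rw [isNCycle_iff]
  constructor
  · rintro ⟨v, hinj, hadj, h0, hverts, hiff⟩
    have hmem := core v hinj hadj h0
    rw [List.mem_map]
    refine ⟨_, hmem, ?_⟩
    apply SimpleGraph.Subgraph.ext
    · exact hverts.symm
    · funext x y
      apply propext
      constructor
      · rintro ⟨hmem', _⟩
        exact (hiff x y).mpr hmem'
      · intro h
        exact ⟨(hiff x y).mp h, C.adj_sub h⟩
  · intro hC
    rw [List.mem_map] at hC
    obtain ⟨E, hE, rfl⟩ := hC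
    have hE' := hE
    rw [targetFinsets, List.mem_map] at hE'
    obtain ⟨t, ht, rfl⟩ := hE'
    refine ⟨vOf t, targets_inj t ht, targets_adj t ht, targets_zero t ht, rfl, ?_⟩
    intro x y
    rw [targets_ofFn t ht]
    constructor
    · exact And.left
    · intro h
      exact ⟨h, targetFinsets_valid _ hE x y h⟩

lemma mkSub_injOn : ∀ E ∈ targetFinsets, ∀ E' ∈ targetFinsets, mkSub E = mkSub E' → E = E' := by
  intro E hE E' hE' h
  ext e
  induction e using Sym2.ind with
  | _ x y =>
    constructor
    · intro hm
      have h2 : (mkSub E).Adj x y := ⟨hm, targetFinsets_valid E hE x y hm⟩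
      rw [h] at h2
      exact h2.1
    · intro hm
      have h2 : (mkSub E').Adj x y := ⟨hm, targetFinsets_valid E' hE' x y hm⟩
      rw [← h] at h2
      exact h2.1

lemma count : Nat.card {C : heawood.Subgraph // IsNCycle 14 C} = 24 := by
  classical
  have hequiv : {C : heawood.Subgraph // IsNCycle 14 C} ≃
      {C : heawood.Subgraph // C ∈ targetFinsets.map mkSub} :=
    Equiv.subtypeEquivRight (fun C => isNCycle_iff_mem C)
  rw [Nat.card_congr hequiv]
  have hnodup : (targetFinsets.map mkSub).Nodup :=
    targetFinsets_nodup.map_on mkSub_injOn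
  rw [Nat.card_congr (List.Nodup.getEquiv _ hnodup).symm]
  rw [Nat.card_eq_fintype_card, Fintype.card_fin, List.length_map, targetFinsets,
    List.length_map]
  rfl

end HeawoodAux

/-- The Heawood graph contains exactly 24 14-cycles. -/
theorem heawood_count_14_cycles :
    Nat.card {C : heawood.Subgraph // IsNCycle 14 C} = 24 := by
  exact HeawoodAux.count
end

section
/- Let x : ZMod 14 → ZMod 14 be an injective map such that x(i) is adjacent to x(i+1) in the Heawood graph for every i ∈ ZMod 14 (so that x enumerates the consecutive vertices of a 14-cycle). If for some i ∈ ZMod 14 the vertex x(i) is adjacent to x(i+5), then for every j ∈ ZMod 14 with j - i even, the vertex x(j) is adjacent to x(j+5). -/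
/-- The three neighbours of a vertex of the Heawood graph. -/
def nbr (v : ZMod 14) : Fin 3 → ZMod 14
  | 0 => v + 1
  | 1 => v - 1
  | 2 => if v.val % 2 = 0 then v + 5 else v + 9

lemma adj_nbr : ∀ u v : ZMod 14, heawood.Adj u v → ∃ c : Fin 3, v = nbr u c := by
  decide

lemma nbr_adj : ∀ u v : ZMod 14, u ≠ v → (∃ c : Fin 3, v = nbr u c) → heawood.Adj u v := by
  decide

/-- `goalB u v` : `v` is one of the three `nbr`-values of `u`. -/
def goalB (u v : ZMod 14) : Bool := decide (∃ c : Fin 3, v = nbr u c)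

/-- DFS check: explores all `nbr`-paths `b_j, b_{j+1}, …, b_13` (where `j = 13 - fuel`)
extending the current vertex `v = b_j` avoiding `vis`, pruning branches where the chord
`b1 ~ b6` fails, and at the end checks the desired chord `b3 ~ b8`. -/
def check : ℕ → ZMod 14 → List (ZMod 14) → ZMod 14 → ZMod 14 → ZMod 14 → Bool
  | 0, _, _, _, r3, r8 => goalB r3 r8
  | f+1, v, vis, r1, r3, r8 =>
    (List.finRange 3).all fun c =>
      decide (nbr v c ∈ vis) ||
      (decide (f = 7) && !(goalB r1 (nbr v c))) ||
      check f (nbr v c) (nbr v c :: vis)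
        (if f = 12 then nbr v c else r1)
        (if f = 10 then nbr v c else r3)
        (if f = 5 then nbr v c else r8)

set_option maxHeartbeats 4000000 in
lemma check_true : ∀ b0 : ZMod 14, check 13 b0 [b0] 0 0 0 = true := by decide

lemma check_sound (b : ℕ → ZMod 14)
    (hstep : ∀ k : ℕ, ∃ c : Fin 3, b (k+1) = nbr (b k) c)
    (hinj : ∀ m n : ℕ, m ≤ 13 → n ≤ 13 → b m = b n → m = n)
    (hchord : ∃ c : Fin 3, b 6 = nbr (b 1) c) :
    ∀ f : ℕ, f ≤ 13 → ∀ vis r1 r3 r8,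
      (∀ u, u ∈ vis → ∃ m, m ≤ 13 - f ∧ u = b m) →
      (1 ≤ 13 - f → r1 = b 1) → (3 ≤ 13 - f → r3 = b 3) → (8 ≤ 13 - f → r8 = b 8) →
      check f (b (13 - f)) vis r1 r3 r8 = true →
      ∃ c : Fin 3, b 8 = nbr (b 3) c := by
  intro f
  induction f with
  | zero =>
      intro _ vis r1 r3 r8 _ _ hr3 hr8 hchk
      rw [check, hr3 (by omega), hr8 (by omega)] at hchk
      exact of_decide_eq_true hchk
  | succ f ih =>
      intro hf vis r1 r3 r8 hvis hr1 hr3 hr8 hchk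
      obtain ⟨c, hc⟩ := hstep (13 - (f+1))
      have hfj : 13 - (f+1) + 1 = 13 - f := by omega
      rw [check, List.all_eq_true] at hchk
      have hbody := hchk c (by simp [List.mem_finRange])
      rw [Bool.or_eq_true, Bool.or_eq_true] at hbody
      rw [← hc, hfj] at hbody
      rcases hbody with (hmem | hch) | hrec
      · -- new vertex already visited: contradiction with injectivity
        rw [decide_eq_true_eq] at hmem
        obtain ⟨m, hm, hbm⟩ := hvis _ hmem
        have := hinj _ _ (by omega) (by omega) hbm
        omega
      · -- chord pruning branch: contradicts hchord
        rw [Bool.and_eq_true, decide_eq_true_eq, Bool.not_eq_true'] at hch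
        obtain ⟨hf7, hgb⟩ := hch
        exfalso
        have h6 : 13 - f = 6 := by omega
        have h1 : r1 = b 1 := hr1 (by omega)
        rw [h6, h1] at hgb
        rw [show goalB (b 1) (b 6) = true from decide_eq_true hchord] at hgb
        exact Bool.false_ne_true hgb.symm
      · -- recursive branch: apply induction hypothesis
        refine ih (by omega) _ _ _ _ ?_ ?_ ?_ ?_ hrec
        · intro u hu
          rcases List.mem_cons.mp hu with h | h
          · exact ⟨13 - f, le_refl _, h⟩
          · obtain ⟨m, hm, hbm⟩ := hvis u h
            exact ⟨m, by omega, hbm⟩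
        · intro h1
          by_cases h : f = 12
          · subst h
            rw [if_pos rfl]
          · rw [if_neg h]
            exact hr1 (by omega)
        · intro h3
          by_cases h : f = 10
          · subst h
            rw [if_pos rfl]
          · rw [if_neg h]
            exact hr3 (by omega)
        · intro h8
          by_cases h : f = 5
          · subst h
            rw [if_pos rfl]
          · rw [if_neg h]
            exact hr8 (by omega)

lemma heawood_step (x : ZMod 14 → ZMod 14)
    (hinj : Function.Injective x)
    (hadj : ∀ i : ZMod 14, heawood.Adj (x i) (x (i + 1)))
    (i : ZMod 14) (hi : heawood.Adj (x i) (x (i + 5))) :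
    heawood.Adj (x (i + 2)) (x (i + 2 + 5)) := by
  set b : ℕ → ZMod 14 := fun k => x (i - 1 + (k : ZMod 14)) with hb
  have hstep : ∀ k : ℕ, ∃ c : Fin 3, b (k+1) = nbr (b k) c := by
    intro k
    refine adj_nbr _ _ ?_
    have := hadj (i - 1 + (k : ZMod 14))
    have he : i - 1 + (k : ZMod 14) + 1 = i - 1 + ((k+1 : ℕ) : ZMod 14) := by
      push_cast; ring
    rw [he] at this
    exact this
  have hbinj : ∀ m n : ℕ, m ≤ 13 → n ≤ 13 → b m = b n → m = n := by
    intro m n hm hn h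
    have h2 : ((m : ZMod 14)) = ((n : ZMod 14)) := add_left_cancel (hinj h)
    have h3 := congrArg ZMod.val h2
    rwa [ZMod.val_cast_of_lt (by omega), ZMod.val_cast_of_lt (by omega)] at h3
  have hchord : ∃ c : Fin 3, b 6 = nbr (b 1) c := by
    refine adj_nbr _ _ ?_
    have e1 : i - 1 + ((1:ℕ) : ZMod 14) = i := by push_cast; ring
    have e6 : i - 1 + ((6:ℕ) : ZMod 14) = i + 5 := by push_cast; ring
    show heawood.Adj (x (i - 1 + ((1:ℕ) : ZMod 14))) (x (i - 1 + ((6:ℕ) : ZMod 14)))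
    rw [e1, e6]
    exact hi
  have key := check_sound b hstep hbinj hchord 13 (le_refl _) [b 0] 0 0 0
    (by rintro u hu; rw [List.mem_singleton] at hu; exact ⟨0, by omega, hu⟩)
    (by omega) (by omega) (by omega)
    (by rw [show (13 - 13 : ℕ) = 0 from rfl]; exact check_true (b 0))
  have hne : b 3 ≠ b 8 := fun h => by have := hbinj 3 8 (by omega) (by omega) h; omega
  have hadj38 : heawood.Adj (b 3) (b 8) := nbr_adj _ _ hne key
  have e3 : i - 1 + ((3:ℕ) : ZMod 14) = i + 2 := by push_cast; ring
  have e8 : i - 1 + ((8:ℕ) : ZMod 14) = i + 2 + 5 := by push_cast; ring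
  show heawood.Adj (x (i + 2)) (x (i + 2 + 5))
  rw [← e8, ← e3]
  exact hadj38

/-- If `x` enumerates the consecutive vertices of a `14`-cycle of the Heawood graph and
`x i` is adjacent to `x (i + 5)`, then for every `j` with `j - i` even, `x j` is adjacent
to `x (j + 5)`. -/
theorem heawood_fourteen_cycle_chords_parity (x : ZMod 14 → ZMod 14)
    (hinj : Function.Injective x)
    (hadj : ∀ i : ZMod 14, heawood.Adj (x i) (x (i + 1)))
    (i : ZMod 14) (hi : heawood.Adj (x i) (x (i + 5))) :
    ∀ j : ZMod 14, (∃ k : ZMod 14, j - i = 2 * k) → heawood.Adj (x j) (x (j + 5)) := by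
  have iter : ∀ n : ℕ, heawood.Adj (x (i + 2 * (n : ZMod 14))) (x (i + 2 * (n : ZMod 14) + 5)) := by
    intro n
    induction n with
    | zero => simpa using hi
    | succ n ih =>
        have := heawood_step x hinj hadj (i + 2 * (n : ZMod 14)) ih
        have he : i + 2 * ((n : ZMod 14)) + 2 = i + 2 * ((n + 1 : ℕ) : ZMod 14) := by
          push_cast
          ring
        rwa [he] at this
  rintro j ⟨k, hk⟩
  have hj : j = i + 2 * ((k.val : ℕ) : ZMod 14) := by
    rw [ZMod.natCast_val, ZMod.cast_id]
    have h2 : j = 2 * k + i := by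
      rw [← hk]; ring
    rw [h2]; ring
  rw [hj]
  exact iter k.val
end

section
/- Let A₁ and A₂ be vertex-disjoint 6-cycles in the Heawood graph, and let v and w be the two vertices of the Heawood graph belonging neither to A₁ nor to A₂. Then v and w are adjacent in the Heawood graph. -/
instance hdec : DecidableRel heawood.Adj := fun i j =>
  inferInstanceAs (Decidable (i ≠ j ∧ (j = i + 1 ∨ j = i - 1 ∨ (Even i ∧ j = i + 5) ∨ (Odd i ∧ j = i - 5))))

def hexList : List (List (ZMod 14)) := [
  [0, 1, 2, 3, 4, 5],
  [0, 1, 2, 5, 6, 7],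
  [2, 3, 4, 5, 6, 7],
  [2, 3, 4, 7, 8, 9],
  [4, 5, 6, 7, 8, 9],
  [1, 2, 3, 4, 9, 10],
  [0, 1, 4, 5, 9, 10],
  [1, 2, 7, 8, 9, 10],
  [0, 1, 5, 6, 10, 11],
  [1, 2, 6, 7, 10, 11],
  [4, 5, 6, 9, 10, 11],
  [6, 7, 8, 9, 10, 11],
  [3, 4, 5, 6, 11, 12],
  [2, 3, 6, 7, 11, 12],
  [1, 2, 3, 10, 11, 12],
  [3, 4, 9, 10, 11, 12],
  [0, 1, 2, 7, 8, 13],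
  [0, 5, 6, 7, 8, 13],
  [0, 4, 5, 8, 9, 13],
  [0, 1, 8, 9, 10, 13],
  [0, 1, 2, 3, 12, 13],
  [0, 3, 4, 5, 12, 13],
  [2, 3, 7, 8, 12, 13],
  [3, 4, 8, 9, 12, 13],
  [0, 5, 6, 11, 12, 13],
  [6, 7, 8, 11, 12, 13],
  [0, 1, 10, 11, 12, 13],
  [8, 9, 10, 11, 12, 13]
]

set_option maxRecDepth 8000 in
set_option synthInstance.maxSize 10000 in
set_option synthInstance.maxHeartbeats 1000000 in
set_option maxHeartbeats 4000000 in
theorem classify : ∀ x0 x1 : ZMod 14, heawood.Adj x0 x1 →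
    ∀ x2, heawood.Adj x1 x2 → x2 ≠ x0 →
    ∀ x3, heawood.Adj x2 x3 → x3 ≠ x0 → x3 ≠ x1 →
    ∀ x4, heawood.Adj x3 x4 → x4 ≠ x0 → x4 ≠ x1 → x4 ≠ x2 →
    ∀ x5, heawood.Adj x4 x5 → x5 ≠ x1 → x5 ≠ x2 → x5 ≠ x3 → heawood.Adj x5 x0 →
    ∃ l ∈ hexList, x0 ∈ l ∧ x1 ∈ l ∧ x2 ∈ l ∧ x3 ∈ l ∧ x4 ∈ l ∧ x5 ∈ l := by decide

set_option maxRecDepth 8000 in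
set_option synthInstance.maxSize 10000 in
set_option synthInstance.maxHeartbeats 1000000 in
set_option maxHeartbeats 4000000 in
theorem pairs : ∀ l₁ ∈ hexList, ∀ l₂ ∈ hexList, (∀ a ∈ l₁, a ∉ l₂) →
    ∀ v : ZMod 14, v ∉ l₁ → v ∉ l₂ → ∀ w : ZMod 14, w ∉ l₁ → w ∉ l₂ → v ≠ w →
    heawood.Adj v w := by decide

theorem hexCard : ∀ l ∈ hexList, l.toFinset.card ≤ 6 := by decide


lemma hex_mem (A : heawood.Subgraph) (h : IsNCycle 6 A) :
    ∃ l ∈ hexList, A.verts = {y : ZMod 14 | y ∈ l} := by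
  obtain ⟨e⟩ := h
  set x : Fin 6 → ZMod 14 := fun i => ((e.symm i : A.verts) : ZMod 14) with hx
  have hmem : ∀ i, x i ∈ A.verts := fun i => (e.symm i).2
  have hinj : Function.Injective x := by
    intro i j hij
    have := Subtype.ext hij
    exact e.symm.toEquiv.injective this
  have hadj : ∀ i j : Fin 6, (SimpleGraph.cycleGraph 6).Adj i j → heawood.Adj (x i) (x j) := by
    intro i j hij
    have h2 : A.coe.Adj (e.symm i) (e.symm j) := e.symm.map_rel_iff.mpr hij
    exact A.adj_sub h2
  have hne : ∀ i j : Fin 6, i ≠ j → x i ≠ x j := fun i j hij h' => hij (hinj h')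
  have hverts : A.verts = {x 0, x 1, x 2, x 3, x 4, x 5} := by
    apply Set.eq_of_subset_of_subset
    · intro y hy
      have h1 : y = x (e ⟨y, hy⟩) := by
        show y = ((e.symm (e ⟨y, hy⟩) : A.verts) : ZMod 14)
        rw [e.symm_apply_apply]
      have h6 : ∀ i : Fin 6, i = 0 ∨ i = 1 ∨ i = 2 ∨ i = 3 ∨ i = 4 ∨ i = 5 := by decide
      rcases h6 (e ⟨y, hy⟩) with h2 | h2 | h2 | h2 | h2 | h2 <;> rw [h2] at h1 <;>
        simp [h1]
    · intro y hy
      rcases hy with h2 | h2 | h2 | h2 | h2 | h2 <;> subst h2 <;> exact hmem _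
  -- the six cycle conditions
  have a01 : heawood.Adj (x 0) (x 1) := hadj 0 1 (by decide)
  have a12 : heawood.Adj (x 1) (x 2) := hadj 1 2 (by decide)
  have a23 : heawood.Adj (x 2) (x 3) := hadj 2 3 (by decide)
  have a34 : heawood.Adj (x 3) (x 4) := hadj 3 4 (by decide)
  have a45 : heawood.Adj (x 4) (x 5) := hadj 4 5 (by decide)
  have a50 : heawood.Adj (x 5) (x 0) := hadj 5 0 (by decide)
  obtain ⟨l, hl, m0, m1, m2, m3, m4, m5⟩ :=
    classify (x 0) (x 1) a01 (x 2) a12 (hne 2 0 (by decide)) (x 3) a23 (hne 3 0 (by decide))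
      (hne 3 1 (by decide)) (x 4) a34 (hne 4 0 (by decide)) (hne 4 1 (by decide))
      (hne 4 2 (by decide)) (x 5) a45 (hne 5 1 (by decide)) (hne 5 2 (by decide))
      (hne 5 3 (by decide)) a50
  refine ⟨l, hl, ?_⟩
  have hsub : ({x 0, x 1, x 2, x 3, x 4, x 5} : Finset (ZMod 14)) ⊆ l.toFinset := by
    intro y hy
    simp only [Finset.mem_insert, Finset.mem_singleton] at hy
    rcases hy with h2 | h2 | h2 | h2 | h2 | h2 <;> subst h2 <;> simp [List.mem_toFinset, *] <;> assumption
  have hcard : ({x 0, x 1, x 2, x 3, x 4, x 5} : Finset (ZMod 14)).card = 6 := by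
    rw [Finset.card_insert_of_notMem (by simp [hne 0 1 (by decide), hne 0 2 (by decide),
          hne 0 3 (by decide), hne 0 4 (by decide), hne 0 5 (by decide)]),
        Finset.card_insert_of_notMem (by simp [hne 1 2 (by decide), hne 1 3 (by decide),
          hne 1 4 (by decide), hne 1 5 (by decide)]),
        Finset.card_insert_of_notMem (by simp [hne 2 3 (by decide), hne 2 4 (by decide),
          hne 2 5 (by decide)]),
        Finset.card_insert_of_notMem (by simp [hne 3 4 (by decide), hne 3 5 (by decide)]),
        Finset.card_insert_of_notMem (by simp [hne 4 5 (by decide)]),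
        Finset.card_singleton]
  have heq : ({x 0, x 1, x 2, x 3, x 4, x 5} : Finset (ZMod 14)) = l.toFinset :=
    Finset.eq_of_subset_of_card_le hsub (by rw [hcard]; exact hexCard l hl)
  rw [hverts]
  have := congrArg (fun s : Finset (ZMod 14) => (↑s : Set (ZMod 14))) heq
  simpa using this


/-- If `A₁` and `A₂` are vertex-disjoint `6`-cycles of the Heawood graph and `v`, `w` are the two
vertices on neither of them, then `v` and `w` are adjacent. -/
theorem heawood_disjoint_six_cycles_complement_adjacent (A₁ A₂ : heawood.Subgraph)
    (h₁ : IsNCycle 6 A₁) (h₂ : IsNCycle 6 A₂) (hdisj : Disjoint A₁.verts A₂.verts)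
    (v w : ZMod 14) (hvw : v ≠ w)
    (hcompl : (A₁.verts ∪ A₂.verts)ᶜ = {v, w}) :
    heawood.Adj v w := by
  obtain ⟨l₁, hl₁, hv₁⟩ := hex_mem A₁ h₁
  obtain ⟨l₂, hl₂, hv₂⟩ := hex_mem A₂ h₂
  have hvmem : v ∉ A₁.verts ∪ A₂.verts := by
    rw [← Set.mem_compl_iff, hcompl]; left; rfl
  have hwmem : w ∉ A₁.verts ∪ A₂.verts := by
    rw [← Set.mem_compl_iff, hcompl]; right; rfl
  have hdisj' : ∀ a ∈ l₁, a ∉ l₂ := by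
    intro a ha hb
    have h1 : a ∈ A₁.verts := by rw [hv₁]; exact ha
    have h2 : a ∈ A₂.verts := by rw [hv₂]; exact hb
    exact Set.disjoint_left.mp hdisj h1 h2
  exact pairs l₁ hl₁ l₂ hl₂ hdisj'
    v (fun h => hvmem (Or.inl (hv₁ ▸ h))) (fun h => hvmem (Or.inr (hv₂ ▸ h)))
    w (fun h => hwmem (Or.inl (hv₁ ▸ h))) (fun h => hwmem (Or.inr (hv₂ ▸ h))) hvw
end
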